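/- Consider a linear model with orthogonal design X′X = nI_p, response Y ∈ ℝ^n, tuning vector Λ = (λ₁,…,λ_p) with λ₁ ≥ … ≥ λ_p ≥ 0, OLS estimator β̂^OLS = (1/n)X′Y and SLOPE estimator β̂^SLOPE. Let π be a permutation of (1,…,p) with |β̂^OLS_{π(1)}| ≥ … ≥ |β̂^OLS_{π(p)}|, and suppose the true support is {1,…,p₀} with p₀ < p. Then supp(β̂^SLOPE) = {1,…,p₀} (i.e. β̂^SLOPE_i = 0 exactly for i > p₀) if and only if: (a) min_{1≤i≤p₀} |β̂^OLS_i| > max_{p₀+1≤i≤p} |β̂^OLS_i|; (b) Σ_{i=k}^{p₀} |β̂^OLS_{π(i)}| > (1/n) Σ_{i=k}^{p₀} λ_i for every k = 1,…,p₀; and (c) Σ_{i=p₀+1}^{k} |β̂^OLS_{π(i)}| ≤ (1/n) Σ_{i=p₀+1}^{k} λ_i for every k = p₀+1,…,p. -/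

import Mathlib

open Matrix

/-- The SLOPE (sorted ℓ₁) norm `J_Λ(b) = ∑ Λᵢ |b|₍ᵢ₎`, expressed (for `Λ` sorted
in decreasing order) as the maximum over permutations of `∑ Λᵢ |b (σ i)|`. -/
noncomputable def slopeNorm {p : ℕ} (Λ : Fin p → ℝ) (b : Fin p → ℝ) : ℝ :=
  ⨆ σ : Equiv.Perm (Fin p), ∑ i, Λ i * |b (σ i)|

/-- The SLOPE objective function `b ↦ ½‖Y - Xb‖₂² + J_Λ(b)`. -/
noncomputable def slopeObj {n p : ℕ} (X : Matrix (Fin n) (Fin p) ℝ) (Y : Fin n → ℝ)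
    (Λ : Fin p → ℝ) (b : Fin p → ℝ) : ℝ :=
  (1 / 2) * ∑ i, (Y i - (X *ᵥ b) i) ^ 2 + slopeNorm Λ b

/-!
With `X'X = nI` the SLOPE objective is, up to a constant, `(n/2)‖b - β̂OLS‖² + J_Λ(b)`, so
`β̂SLOPE` is the proximal point of `J_Λ / n` at `β̂OLS`. Taking absolute values and permuting by
`τ`, `v = |β̂SLOPE ∘ τ|` is the proximal point of the sorted vector `u = |β̂OLS ∘ τ|`. Swapping two
coordinates shows that `v` is ordered like `u`, ties included because the minimiser is unique;
so `v` is nonnegative and decreasing, and its support is an initial segment `[0, s)`.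
On the cone of nonnegative decreasing vectors `J_Λ` is linear, hence the first-order condition
`⟨n (v - u) + Λ, c - v⟩ ≥ 0` holds for every `c` in that cone. Testing it with `c = v ∓ ε 1_B`
for blocks `B` ending at `s` or starting at `s` gives (b) and (c) with `p₀` replaced by `s`, and
these inequalities in turn force `s = p₀`. Condition (a), which the swapping argument also
derives from the support, makes `τ` map `[0, p₀)` onto itself, so the support of `v` transfers
back to `β̂SLOPE`.
-/

open Finset Filter Topology

namespace Slope

variable {p : ℕ}

theorem nonneg_of_forall_nonneg_add_mul {E D : ℝ}
    (h : ∀ t : ℝ, 0 < t → t < 1 → 0 ≤ E + t * D) : 0 ≤ E := by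
  have hcont : Continuous fun t : ℝ => E + t * D := by fun_prop
  have hlim : Tendsto (fun t : ℝ => E + t * D) (𝓝[>] 0) (𝓝 E) :=
    tendsto_nhdsWithin_of_tendsto_nhds (by simpa using hcont.tendsto 0)
  refine ge_of_tendsto hlim ?_
  filter_upwards [Ioo_mem_nhdsGT one_pos] with t ht using h t ht.1 ht.2

theorem exists_pos_le_of_pos {ι : Type*} [Finite ι] (v : ι → ℝ) :
    ∃ ε > 0, ∀ i, 0 < v i → ε ≤ v i := by
  have hall : ∀ᶠ ε in 𝓝[>] (0 : ℝ), ∀ i, 0 < v i → ε ≤ v i :=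
    eventually_all.2 fun i => by
      by_cases hi : 0 < v i
      · exact ((eventually_lt_nhds hi).filter_mono nhdsWithin_le_nhds).mono fun ε h _ => h.le
      · exact Eventually.of_forall fun ε h => absurd h hi
  exact (eventually_mem_nhdsWithin.and hall).exists

theorem exists_pos_iff_lt_of_antitone {v : Fin p → ℝ} (hv : Antitone v) :
    ∃ s ≤ p, ∀ i : Fin p, 0 < v i ↔ (i : ℕ) < s := by
  set P : Finset (Fin p) := {j | 0 < v j}
  refine ⟨#P, (card_filter_le _ _).trans (card_fin p).le, fun i => ⟨fun hi => ?_, fun hi => ?_⟩⟩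
  · have hsub : Iic i ⊆ P := fun j hj =>
      mem_filter.2 ⟨mem_univ j, hi.trans_le (hv (mem_Iic.1 hj))⟩
    have := card_le_card hsub
    rw [Fin.card_Iic] at this
    omega
  · by_contra hi'
    have hsub : P ⊆ Iio i := fun j hj =>
      mem_Iio.2 (lt_of_not_ge fun hij => hi' ((mem_filter.1 hj).2.trans_le (hv hij)))
    have := card_le_card hsub
    rw [Fin.card_Iio] at this
    omega

theorem lt_iff_lt_of_antitone_comp {α : Type*} [LinearOrder α] {f : Fin p → α}
    {τ : Equiv.Perm (Fin p)} (hτ : Antitone (f ∘ τ)) {p₀ : ℕ}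
    (hsep : ∀ i j : Fin p, (i : ℕ) < p₀ → p₀ ≤ (j : ℕ) → f j < f i) (a : Fin p) :
    (τ a : ℕ) < p₀ ↔ (a : ℕ) < p₀ := by
  have hmaps : ∀ a : Fin p, (a : ℕ) < p₀ → (τ a : ℕ) < p₀ := fun a ha => by
    by_contra hτa
    have hmap : Set.MapsTo τ.symm (Iic a) (Iio a) := fun i hi => by
      refine mem_Iio.2 (lt_of_not_ge fun hai => ?_)
      have := hτ hai
      simp only [Function.comp_apply, Equiv.apply_symm_apply] at this
      exact (hsep i (τ a) (by have := mem_Iic.1 hi; omega) (by omega)).not_ge this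
    have := card_le_card_of_injOn _ hmap τ.symm.injective.injOn
    rw [Fin.card_Iic, Fin.card_Iio] at this
    omega
  set S : Finset (Fin p) := {i | (i : ℕ) < p₀}
  have hS : S.map τ.toEmbedding = S := map_eq_of_subset fun i hi => by
    obtain ⟨j, hj, rfl⟩ := mem_map.1 hi
    simpa [S] using hmaps j (by simpa [S] using hj)
  refine ⟨fun h => ?_, hmaps a⟩
  have : τ a ∈ S.map τ.toEmbedding := by rw [hS]; simpa [S] using h
  simpa [S] using this

theorem sum_le_slopeNorm (Λ b : Fin p → ℝ) (σ : Equiv.Perm (Fin p)) :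
    ∑ i, Λ i * |b (σ i)| ≤ slopeNorm Λ b :=
  le_ciSup (f := fun σ : Equiv.Perm (Fin p) => ∑ i, Λ i * |b (σ i)|)
    (Set.finite_range _).bddAbove σ

theorem slopeNorm_le {Λ b : Fin p → ℝ} {M : ℝ}
    (h : ∀ σ : Equiv.Perm (Fin p), ∑ i, Λ i * |b (σ i)| ≤ M) : slopeNorm Λ b ≤ M :=
  ciSup_le h

theorem slopeNorm_congr_abs (Λ : Fin p → ℝ) {b c : Fin p → ℝ} (h : ∀ i, |b i| = |c i|) :
    slopeNorm Λ b = slopeNorm Λ c := by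
  simp only [slopeNorm, h]

theorem slopeNorm_comp_perm (Λ b : Fin p → ℝ) (e : Equiv.Perm (Fin p)) :
    slopeNorm Λ (b ∘ e) = slopeNorm Λ b :=
  Equiv.iSup_comp (g := fun σ : Equiv.Perm (Fin p) => ∑ i, Λ i * |b (σ i)|) (Equiv.mulLeft e)

theorem slopeNorm_eq_sum {Λ b : Fin p → ℝ} (hΛ : Antitone Λ) (hb : Antitone b)
    (hb0 : ∀ i, 0 ≤ b i) : slopeNorm Λ b = ∑ i, Λ i * b i := by
  refine le_antisymm (slopeNorm_le fun σ => ?_) ?_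
  · simp only [abs_of_nonneg (hb0 _)]
    exact (hΛ.monovary hb).sum_smul_comp_perm_le_sum_smul
  · simpa [abs_of_nonneg (hb0 _)] using sum_le_slopeNorm Λ b 1

theorem convexOn_slopeNorm {Λ : Fin p → ℝ} (hΛ : ∀ i, 0 ≤ Λ i) :
    ConvexOn ℝ Set.univ (slopeNorm Λ) := by
  refine ⟨convex_univ, fun x _ y _ a b ha hb _ => slopeNorm_le fun σ => ?_⟩
  calc ∑ i, Λ i * |(a • x + b • y) (σ i)|
      ≤ ∑ i, (a * (Λ i * |x (σ i)|) + b * (Λ i * |y (σ i)|)) := by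
        refine sum_le_sum fun i _ => ?_
        have := abs_add_le (a * x (σ i)) (b * y (σ i))
        rw [abs_mul, abs_mul, abs_of_nonneg ha, abs_of_nonneg hb] at this
        simp only [Pi.add_apply, Pi.smul_apply, smul_eq_mul]
        nlinarith [hΛ i]
    _ = a * ∑ i, Λ i * |x (σ i)| + b * ∑ i, Λ i * |y (σ i)| := by
        rw [sum_add_distrib, mul_sum, mul_sum]
    _ ≤ a • slopeNorm Λ x + b • slopeNorm Λ y := by
        simp only [smul_eq_mul]
        gcongr <;> exact sum_le_slopeNorm _ _ σ

noncomputable def slopeProxObj (γ : ℝ) (Λ β b : Fin p → ℝ) : ℝ :=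
  γ / 2 * ∑ i, (b i - β i) ^ 2 + slopeNorm Λ b

def IsSlopeProx (γ : ℝ) (Λ β b : Fin p → ℝ) : Prop :=
  ∀ c, slopeProxObj γ Λ β b ≤ slopeProxObj γ Λ β c

theorem slopeObj_eq_slopeProxObj {n : ℕ} {X : Matrix (Fin n) (Fin p) ℝ} {Y : Fin n → ℝ}
    {γ : ℝ} {β : Fin p → ℝ} (hX : Xᵀ * X = γ • 1) (hXY : Xᵀ *ᵥ Y = γ • β)
    (Λ b : Fin p → ℝ) :
    slopeObj X Y Λ b
      = slopeProxObj γ Λ β b + (1 / 2 * ∑ i, Y i ^ 2 - γ / 2 * ∑ i, β i ^ 2) := by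
  have hcross : ∑ i, Y i * (X *ᵥ b) i = γ * ∑ j, β j * b j := by
    change Y ⬝ᵥ X *ᵥ b = _
    rw [dotProduct_mulVec, ← mulVec_transpose, hXY, smul_dotProduct]
    rfl
  have hquad : ∑ i, (X *ᵥ b) i ^ 2 = γ * ∑ j, b j ^ 2 := by
    rw [show ∑ i, (X *ᵥ b) i ^ 2 = (X *ᵥ b) ⬝ᵥ X *ᵥ b by simp [dotProduct, sq],
      dotProduct_mulVec, ← mulVec_transpose, mulVec_mulVec, hX, smul_mulVec, one_mulVec,
      smul_dotProduct]
    simp [dotProduct, sq]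
  have hexp : ∑ i, (Y i - (X *ᵥ b) i) ^ 2
      = ∑ i, Y i ^ 2 - 2 * ∑ i, Y i * (X *ᵥ b) i + ∑ i, (X *ᵥ b) i ^ 2 := by
    rw [mul_sum, ← sum_sub_distrib, ← sum_add_distrib]
    exact sum_congr rfl fun i _ => by ring
  have hexp' : ∑ j, (b j - β j) ^ 2 = ∑ j, b j ^ 2 - 2 * ∑ j, β j * b j + ∑ j, β j ^ 2 := by
    rw [mul_sum, ← sum_sub_distrib, ← sum_add_distrib]
    exact sum_congr rfl fun j _ => by ring
  rw [slopeObj, slopeProxObj, hexp, hcross, hquad, hexp']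
  ring

theorem isSlopeProx_of_orthogonal {n : ℕ} {X : Matrix (Fin n) (Fin p) ℝ} {Y : Fin n → ℝ}
    {γ : ℝ} {Λ β b : Fin p → ℝ} (hX : Xᵀ * X = γ • 1) (hXY : Xᵀ *ᵥ Y = γ • β)
    (hb : ∀ c, slopeObj X Y Λ b ≤ slopeObj X Y Λ c) : IsSlopeProx γ Λ β b := fun c => by
  simpa only [slopeObj_eq_slopeProxObj hX hXY, add_le_add_iff_right] using hb c

theorem slopeProxObj_comp_swap (γ : ℝ) (Λ β b : Fin p → ℝ) (i j : Fin p) :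
    slopeProxObj γ Λ β (b ∘ Equiv.swap i j)
      = slopeProxObj γ Λ β b + γ * ((b i - b j) * (β i - β j)) := by
  rcases eq_or_ne i j with rfl | hij
  · simp
  have hsq : ∑ l, ((b ∘ Equiv.swap i j) l - β l) ^ 2
      = ∑ l, (b l - β l) ^ 2 + 2 * ((b i - b j) * (β i - β j)) := by
    rw [← sub_eq_iff_eq_add', ← sum_sub_distrib,
      Fintype.sum_eq_add i j hij fun l hl => by simp [Equiv.swap_apply_of_ne_of_ne hl.1 hl.2]]
    simp only [Function.comp_apply, Equiv.swap_apply_left, Equiv.swap_apply_right]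
    ring
  rw [slopeProxObj, slopeProxObj, slopeNorm_comp_perm, hsq]
  ring

theorem slopeProxObj_comp_perm (γ : ℝ) (Λ β b : Fin p → ℝ) (τ : Equiv.Perm (Fin p)) :
    slopeProxObj γ Λ (β ∘ τ) (b ∘ τ) = slopeProxObj γ Λ β b := by
  simp only [slopeProxObj, slopeNorm_comp_perm, Function.comp_apply,
    Equiv.sum_comp τ fun i => (b i - β i) ^ 2]

namespace IsSlopeProx

variable {γ : ℝ} {Λ β b : Fin p → ℝ}

theorem variational (hb : IsSlopeProx γ Λ β b) (hΛ : ∀ i, 0 ≤ Λ i) (c : Fin p → ℝ) :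
    0 ≤ γ * ∑ i, (b i - β i) * (c i - b i) + (slopeNorm Λ c - slopeNorm Λ b) := by
  refine nonneg_of_forall_nonneg_add_mul (D := γ / 2 * ∑ i, (c i - b i) ^ 2) fun t ht0 ht1 => ?_
  have hconv := (convexOn_slopeNorm hΛ).2 (Set.mem_univ b) (Set.mem_univ c)
    (sub_nonneg.2 ht1.le) ht0.le (sub_add_cancel 1 t)
  have hsq : ∑ i, (((1 - t) • b + t • c) i - β i) ^ 2 = ∑ i, (b i - β i) ^ 2
      + 2 * t * ∑ i, (b i - β i) * (c i - b i) + t ^ 2 * ∑ i, (c i - b i) ^ 2 := by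
    simp only [mul_sum, ← sum_add_distrib]
    exact sum_congr rfl fun i _ => by simp only [Pi.add_apply, Pi.smul_apply, smul_eq_mul]; ring
  have hmin := hb ((1 - t) • b + t • c)
  simp only [slopeProxObj, hsq, smul_eq_mul] at hmin hconv
  nlinarith

theorem unique (hb : IsSlopeProx γ Λ β b) {b' : Fin p → ℝ} (hb' : IsSlopeProx γ Λ β b')
    (hγ : 0 < γ) (hΛ : ∀ i, 0 ≤ Λ i) : b = b' := by
  have hsum : ∑ i, (b i - b' i) ^ 2 ≤ 0 := by
    have h := add_nonneg (hb.variational hΛ b') (hb'.variational hΛ b)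
    have hrw : γ * ∑ i, (b i - β i) * (b' i - b i) + γ * ∑ i, (b' i - β i) * (b i - b' i)
        = -γ * ∑ i, (b i - b' i) ^ 2 := by
      simp only [mul_sum, ← sum_add_distrib]
      exact sum_congr rfl fun i _ => by ring
    nlinarith
  funext i
  have h0 := (sum_eq_zero_iff_of_nonneg fun j _ => sq_nonneg (b j - b' j)).1
    (le_antisymm hsum (sum_nonneg fun j _ => sq_nonneg _)) i (mem_univ i)
  exact sub_eq_zero.1 (pow_eq_zero_iff two_ne_zero |>.1 h0)

theorem mul_sub_nonneg (hb : IsSlopeProx γ Λ β b) (hγ : 0 < γ) (i j : Fin p) :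
    0 ≤ (b i - b j) * (β i - β j) := by
  have h := hb (b ∘ Equiv.swap i j)
  rw [slopeProxObj_comp_swap] at h
  exact nonneg_of_mul_nonneg_right (by linarith) hγ

theorem eq_of_eq (hb : IsSlopeProx γ Λ β b) (hγ : 0 < γ) (hΛ : ∀ i, 0 ≤ Λ i) {i j : Fin p}
    (hβ : β i = β j) : b i = b j := by
  have hswap : IsSlopeProx γ Λ β (b ∘ Equiv.swap i j) := by
    simpa [IsSlopeProx, slopeProxObj_comp_swap, hβ] using hb
  simpa using congrFun (hswap.unique hb hγ hΛ) j

theorem antitone (hb : IsSlopeProx γ Λ β b) (hγ : 0 < γ) (hΛ : ∀ i, 0 ≤ Λ i)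
    (hβ : Antitone β) : Antitone b := by
  intro i j hij
  rcases (hβ hij).eq_or_lt with heq | hlt
  · exact (hb.eq_of_eq hγ hΛ heq).le
  · have := hb.mul_sub_nonneg hγ j i
    nlinarith

theorem comp_perm (hb : IsSlopeProx γ Λ β b) (τ : Equiv.Perm (Fin p)) :
    IsSlopeProx γ Λ (β ∘ τ) (b ∘ τ) := fun c => by
  have := hb (c ∘ τ.symm)
  rwa [← slopeProxObj_comp_perm γ Λ β b τ, ← slopeProxObj_comp_perm γ Λ β _ τ,
    Function.comp_assoc, τ.symm_comp_self, Function.comp_id] at this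

theorem abs (hb : IsSlopeProx γ Λ β b) (hγ : 0 ≤ γ) :
    IsSlopeProx γ Λ (fun i => |β i|) (fun i => |b i|) := fun c => by
  set c' : Fin p → ℝ := fun i => if 0 ≤ β i then c i else -c i
  have hsq : ∀ i, (c' i - β i) ^ 2 = (c i - |β i|) ^ 2 := fun i => by
    by_cases h : 0 ≤ β i
    · simp [c', h, abs_of_nonneg h]
    · simp only [c', h, if_false, abs_of_neg (not_le.1 h)]; ring
  have hlift : slopeProxObj γ Λ β c' = slopeProxObj γ Λ (fun i => |β i|) c := by
    rw [slopeProxObj, slopeProxObj, slopeNorm_congr_abs Λ (c := c) fun i => by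
      by_cases h : 0 ≤ β i <;> simp [c', h]]
    simp only [hsq]
  have hdrop : slopeProxObj γ Λ (fun i => |β i|) (fun i => |b i|) ≤ slopeProxObj γ Λ β b := by
    rw [slopeProxObj, slopeProxObj, slopeNorm_congr_abs Λ (c := b) fun i => abs_abs (b i)]
    gcongr γ / 2 * ?_ + _
    exact sum_le_sum fun i _ => sq_le_sq.2 (abs_abs_sub_abs_le_abs_sub (b i) (β i))
  exact hdrop.trans ((hb c').trans hlift.le)

theorem abs_lt_abs (hb : IsSlopeProx γ Λ β b) (hγ : 0 < γ) (hΛ : ∀ i, 0 ≤ Λ i) {i j : Fin p}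
    (hi : b i ≠ 0) (hj : b j = 0) : |β j| < |β i| := by
  have habs := hb.abs hγ.le
  have hmono := habs.mul_sub_nonneg hγ i j
  have htie := mt (habs.eq_of_eq hγ hΛ (i := i) (j := j))
  simp only [hj, abs_zero, sub_zero] at hmono htie
  have hpos : 0 < |b i| := abs_pos.2 hi
  exact lt_of_le_of_ne (le_of_sub_nonneg (nonneg_of_mul_nonneg_right hmono hpos))
    fun h => htie hpos.ne' h.symm

variable {u v : Fin p → ℝ}

theorem sum_block_nonneg (hv : IsSlopeProx γ Λ u v) (hΛ : Antitone Λ) (hΛ0 : ∀ i, 0 ≤ Λ i)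
    (hvanti : Antitone v) (hv0 : ∀ i, 0 ≤ v i) (S : Finset (Fin p)) (t : ℝ)
    (hc : Antitone fun i => v i + if i ∈ S then t else 0)
    (hc0 : ∀ i, 0 ≤ v i + if i ∈ S then t else 0) :
    0 ≤ t * ∑ i ∈ S, (γ * (v i - u i) + Λ i) := by
  have h := hv.variational hΛ0 fun i => v i + if i ∈ S then t else 0
  rw [slopeNorm_eq_sum hΛ hc hc0, slopeNorm_eq_sum hΛ hvanti hv0, mul_sum, ← sum_sub_distrib,
    ← sum_add_distrib] at h
  convert h using 1
  rw [mul_sum, ← sum_filter_add_sum_filter_not univ (· ∈ S), filter_mem_eq_inter, univ_inter,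
    sum_eq_zero (s := filter _ _) fun i hi => by simp [(mem_filter.1 hi).2], add_zero]
  exact sum_congr rfl fun i hi => by simp [hi]; ring

theorem sum_lt_of_lt_support (hv : IsSlopeProx γ Λ u v) (hγ : 0 < γ) (hΛ : Antitone Λ)
    (hΛ0 : ∀ i, 0 ≤ Λ i) (hvanti : Antitone v) (hv0 : ∀ i, 0 ≤ v i) {s : ℕ} (hsp : s ≤ p)
    (hs : ∀ i : Fin p, 0 < v i ↔ (i : ℕ) < s) {k : ℕ} (hk : k < s) :
    ∑ i ∈ {i : Fin p | k ≤ (i : ℕ) ∧ (i : ℕ) < s}, Λ i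
      < γ * ∑ i ∈ {i : Fin p | k ≤ (i : ℕ) ∧ (i : ℕ) < s}, u i := by
  set S : Finset (Fin p) := {i | k ≤ (i : ℕ) ∧ (i : ℕ) < s}
  have hvS : ∀ i ∈ S, 0 < v i := fun i hi => (hs i).2 (mem_filter.1 hi).2.2
  obtain ⟨ε, hε, hεv⟩ := exists_pos_le_of_pos v
  have hblock := hv.sum_block_nonneg hΛ hΛ0 hvanti hv0 S (-ε)
    (fun a b hab => by
      have := hvanti hab
      simp only [S, mem_filter, mem_univ, true_and]
      split_ifs with hb ha ha
      · linarith
      · linarith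
      · have hb0 : v b = 0 := le_antisymm (not_lt.1 fun h => by
          have := (hs b).1 h; have : (a : ℕ) ≤ b := hab; omega) (hv0 b)
        linarith [hεv a ((hs a).2 ha.2)]
      · linarith)
    (fun i => by
      split_ifs with hi
      · linarith [hεv i (hvS i hi)]
      · linarith [hv0 i])
  have hpos : 0 < ∑ i ∈ S, v i :=
    sum_pos hvS ⟨⟨k, by omega⟩, mem_filter.2 ⟨mem_univ _, le_rfl, hk⟩⟩
  rw [sum_add_distrib, ← mul_sum, sum_sub_distrib] at hblock
  nlinarith [mul_pos hγ hpos]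

theorem le_sum_of_support_le (hv : IsSlopeProx γ Λ u v) (hΛ : Antitone Λ)
    (hΛ0 : ∀ i, 0 ≤ Λ i) (hvanti : Antitone v) (hv0 : ∀ i, 0 ≤ v i) {s : ℕ}
    (hs : ∀ i : Fin p, 0 < v i ↔ (i : ℕ) < s) (k : ℕ) :
    γ * ∑ i ∈ {i : Fin p | s ≤ (i : ℕ) ∧ (i : ℕ) ≤ k}, u i
      ≤ ∑ i ∈ {i : Fin p | s ≤ (i : ℕ) ∧ (i : ℕ) ≤ k}, Λ i := by
  set S : Finset (Fin p) := {i | s ≤ (i : ℕ) ∧ (i : ℕ) ≤ k}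
  have hvS : ∀ i ∈ S, v i = 0 := fun i hi =>
    le_antisymm (not_lt.1 fun h => by have := (hs i).1 h; have := (mem_filter.1 hi).2.1; omega)
      (hv0 i)
  obtain ⟨ε, hε, hεv⟩ := exists_pos_le_of_pos v
  have hblock := hv.sum_block_nonneg hΛ hΛ0 hvanti hv0 S ε
    (fun a b hab => by
      have := hvanti hab
      simp only [S, mem_filter, mem_univ, true_and]
      split_ifs with hb ha ha
      · linarith
      · have ha' : 0 < v a := (hs a).2 (by have : (a : ℕ) ≤ b := hab; omega)
        linarith [hεv a ha', hvS b (mem_filter.2 ⟨mem_univ _, hb⟩)]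
      · linarith
      · linarith)
    (fun i => by split_ifs <;> linarith [hv0 i])
  rw [sum_add_distrib, ← mul_sum, sum_sub_distrib, sum_eq_zero hvS] at hblock
  nlinarith

theorem pos_iff_lt_iff (hv : IsSlopeProx γ Λ u v) (hγ : 0 < γ) (hΛ : Antitone Λ)
    (hΛ0 : ∀ i, 0 ≤ Λ i) (hvanti : Antitone v) (hv0 : ∀ i, 0 ≤ v i) {p₀ : ℕ} (hp₀ : p₀ ≤ p) :
    (∀ i : Fin p, 0 < v i ↔ (i : ℕ) < p₀) ↔
      (∀ k < p₀, ∑ i ∈ {i : Fin p | k ≤ (i : ℕ) ∧ (i : ℕ) < p₀}, Λ i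
          < γ * ∑ i ∈ {i : Fin p | k ≤ (i : ℕ) ∧ (i : ℕ) < p₀}, u i) ∧
      (∀ k, p₀ ≤ k → k < p → γ * ∑ i ∈ {i : Fin p | p₀ ≤ (i : ℕ) ∧ (i : ℕ) ≤ k}, u i
          ≤ ∑ i ∈ {i : Fin p | p₀ ≤ (i : ℕ) ∧ (i : ℕ) ≤ k}, Λ i) := by
  refine ⟨fun hs => ⟨fun k => hv.sum_lt_of_lt_support hγ hΛ hΛ0 hvanti hv0 hp₀ hs,
    fun k _ _ => hv.le_sum_of_support_le hΛ hΛ0 hvanti hv0 hs k⟩, fun ⟨hlt, hle⟩ => ?_⟩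
  obtain ⟨s, hsp, hs⟩ := exists_pos_iff_lt_of_antitone hvanti
  suffices s = p₀ from this ▸ hs
  by_contra hne
  rcases lt_or_gt_of_ne hne with h | h
  · have h1 := hv.le_sum_of_support_le hΛ hΛ0 hvanti hv0 hs (p₀ - 1)
    have hS : ({i : Fin p | s ≤ (i : ℕ) ∧ (i : ℕ) ≤ p₀ - 1} : Finset (Fin p))
        = ({i : Fin p | s ≤ (i : ℕ) ∧ (i : ℕ) < p₀} : Finset (Fin p)) :=
      filter_congr fun i _ => by omega
    rw [hS] at h1
    linarith [hlt s h]
  · have h2 := hle (s - 1) (by omega) (by omega)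
    have hS : ({i : Fin p | p₀ ≤ (i : ℕ) ∧ (i : ℕ) ≤ s - 1} : Finset (Fin p))
        = ({i : Fin p | p₀ ≤ (i : ℕ) ∧ (i : ℕ) < s} : Finset (Fin p)) :=
      filter_congr fun i _ => by omega
    rw [hS] at h2
    linarith [hv.sum_lt_of_lt_support hγ hΛ hΛ0 hvanti hv0 hsp hs h]

end IsSlopeProx

end Slope

open Slope in
/-- Support recovery by SLOPE in the orthogonal design, with `τ` a permutation
sorting `|β̂OLS|` decreasingly and the true support being the first `p₀`
coordinates (0-based: indices `i` with `(i : ℕ) < p₀`): SLOPE recovers the support,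
i.e. `β̂SLOPE_i = 0 ⟺ p₀ ≤ i`, if and only if
(a) `min_{i < p₀} |β̂OLS_i| > max_{i ≥ p₀} |β̂OLS_i|`,
(b) for every `k < p₀`: `∑_{k ≤ i < p₀} |β̂OLS_{τ(i)}| > (1/n) ∑_{k ≤ i < p₀} Λ_i`,
(c) for every `p₀ ≤ k < p`: `∑_{p₀ ≤ i ≤ k} |β̂OLS_{τ(i)}| ≤ (1/n) ∑_{p₀ ≤ i ≤ k} Λ_i`. -/
theorem slope_support_recovery_iff {n p : ℕ} (hn : 0 < n)
    (X : Matrix (Fin n) (Fin p) ℝ) (Y : Fin n → ℝ)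
    (hX : Xᵀ * X = (n : ℝ) • (1 : Matrix (Fin p) (Fin p) ℝ))
    (Λ : Fin p → ℝ) (hΛanti : Antitone Λ) (hΛnonneg : ∀ i, 0 ≤ Λ i)
    (βOLS : Fin p → ℝ) (hOLS : βOLS = (1 / (n : ℝ)) • (Xᵀ *ᵥ Y))
    (βS : Fin p → ℝ) (hβS : ∀ b, slopeObj X Y Λ βS ≤ slopeObj X Y Λ b)
    (τ : Equiv.Perm (Fin p))
    (hτ : ∀ i j : Fin p, i ≤ j → |βOLS (τ j)| ≤ |βOLS (τ i)|)
    (p₀ : ℕ) (hp₀ : p₀ < p) :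
    (∀ i : Fin p, βS i = 0 ↔ p₀ ≤ (i : ℕ)) ↔
      ((∀ i j : Fin p, (i : ℕ) < p₀ → p₀ ≤ (j : ℕ) → |βOLS j| < |βOLS i|) ∧
       (∀ k : ℕ, k < p₀ →
         (1 / (n : ℝ)) * ∑ i ∈ Finset.univ.filter
             (fun i : Fin p => k ≤ (i : ℕ) ∧ (i : ℕ) < p₀), Λ i
           < ∑ i ∈ Finset.univ.filter
             (fun i : Fin p => k ≤ (i : ℕ) ∧ (i : ℕ) < p₀), |βOLS (τ i)|) ∧
       (∀ k : ℕ, p₀ ≤ k → k < p →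
         ∑ i ∈ Finset.univ.filter
             (fun i : Fin p => p₀ ≤ (i : ℕ) ∧ (i : ℕ) ≤ k), |βOLS (τ i)|
           ≤ (1 / (n : ℝ)) * ∑ i ∈ Finset.univ.filter
             (fun i : Fin p => p₀ ≤ (i : ℕ) ∧ (i : ℕ) ≤ k), Λ i)) := by
  have hn' : (0 : ℝ) < n := Nat.cast_pos.2 hn
  have hXY : Xᵀ *ᵥ Y = (n : ℝ) • βOLS := by
    rw [hOLS, smul_smul, mul_one_div_cancel hn'.ne', one_smul]
  have hS : IsSlopeProx n Λ βOLS βS := isSlopeProx_of_orthogonal hX hXY hβS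
  set v : Fin p → ℝ := fun i => |βS (τ i)|
  have hv : IsSlopeProx n Λ (fun i => |βOLS (τ i)|) v := (hS.abs hn'.le).comp_perm τ
  have hsorted := hv.pos_iff_lt_iff hn' hΛanti hΛnonneg (hv.antitone hn' hΛnonneg hτ)
    (fun i => abs_nonneg _) hp₀.le
  have hsupp : (∀ i j : Fin p, (i : ℕ) < p₀ → p₀ ≤ (j : ℕ) → |βOLS j| < |βOLS i|) →
      ((∀ i : Fin p, βS i = 0 ↔ p₀ ≤ (i : ℕ)) ↔ ∀ a : Fin p, 0 < v a ↔ (a : ℕ) < p₀) := by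
    intro ha
    rw [τ.symm.forall_congr_left]
    refine forall_congr' fun a => ?_
    rw [Equiv.symm_symm, abs_pos, ← lt_iff_lt_of_antitone_comp (f := fun i => |βOLS i|) hτ ha a,
      ← not_le, ne_eq, not_iff_not]
  refine ⟨fun h => ?_, fun ⟨ha, hbc⟩ => (hsupp ha).2 (hsorted.2 ?_)⟩
  · have ha : ∀ i j : Fin p, (i : ℕ) < p₀ → p₀ ≤ (j : ℕ) → |βOLS j| < |βOLS i| :=
      fun i j hi hj => hS.abs_lt_abs hn' hΛnonneg (fun h0 => by have := (h i).1 h0; omega)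
        ((h j).2 hj)
    refine ⟨ha, ?_⟩
    simpa only [one_div, inv_mul_lt_iff₀ hn', le_inv_mul_iff₀ hn'] using hsorted.1 ((hsupp ha).1 h)
  · simpa only [one_div, inv_mul_lt_iff₀ hn', le_inv_mul_iff₀ hn'] using hbc
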